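/- For any finite Markov chain M, integer k ≥ 1, and λ ∈ (0,1], the infimum inf{d_λ(M,N) : N a Markov chain with at most k states} is attained, i.e., there exists an optimal k-state approximant N* with d_λ(M,N*) = inf{d_λ(M,N) : N with at most k states}. -/

import Mathlib

/-!
Fix the size `n`, the labelling `α` and the initial state `n0` of the approximant. The Kantorovich
distance is lower semicontinuous on pairs of distributions (optimal couplings range over a compact
set), so the pairs `(θ, d)` with `θ` stochastic and `d` a `[0, 1]`-valued pre-fixed point of `psi`
for `sumT τ θ` form a compact set; minimising `d (inl m0) (inr n0)` over it yields an optimal `θ`.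
The distance depends on `α` only through which states of `M ⊕ Fin n` share a label, so for `n ≤ k`
these optimal values form a finite set, whose least element is the optimum.
-/

open Finset

def IsDist {X : Type*} [Fintype X] (μ : X → ℝ) : Prop :=
  (∀ x, 0 ≤ μ x) ∧ ∑ x, μ x = 1

def IsCoupling {X : Type*} [Fintype X] (μ ν : X → ℝ) (ω : X × X → ℝ) : Prop :=
  IsDist ω ∧ (∀ x, ∑ y, ω (x, y) = μ x) ∧ (∀ y, ∑ x, ω (x, y) = ν y)

noncomputable def kant {X : Type*} [Fintype X] (d : X → X → ℝ) (μ ν : X → ℝ) : ℝ :=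
  sInf { c | ∃ ω : X × X → ℝ, IsCoupling μ ν ω ∧ c = ∑ p : X × X, d p.1 p.2 * ω p }

open Classical in
noncomputable def psi {S L : Type*} [Fintype S] (lam : ℝ) (T : S → S → ℝ) (lab : S → L)
    (d : S → S → ℝ) : S → S → ℝ :=
  fun s t => if lab s = lab t then lam * kant d (T s) (T t) else 1

noncomputable def bdist {S L : Type*} [Fintype S] (lam : ℝ) (T : S → S → ℝ) (lab : S → L) :
    S → S → ℝ := fun s t =>
  sInf { r | ∃ d : S → S → ℝ, (∀ a b, 0 ≤ d a b ∧ d a b ≤ 1) ∧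
      (∀ a b, psi lam T lab d a b ≤ d a b) ∧ r = d s t }

def sumT {M N : Type*} (τ : M → M → ℝ) (θ : N → N → ℝ) : M ⊕ N → M ⊕ N → ℝ
  | Sum.inl m, Sum.inl m' => τ m m'
  | Sum.inr n, Sum.inr n' => θ n n'
  | _, _ => 0

def sumL {M N L : Type*} (ℓ : M → L) (α : N → L) : M ⊕ N → L
  | Sum.inl m => ℓ m
  | Sum.inr n => α n

open Set

theorem Function.FactorsThrough.finite_range {α β γ : Type*} [Finite β] {g : α → γ} {f : α → β}
    (hg : g.FactorsThrough f) : (range g).Finite := by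
  have : Finite (Quotient (Setoid.ker f)) :=
    Finite.of_injective (Setoid.kerLift f) (Setoid.kerLift_injective f)
  rw [← range_quotient_lift (s := Setoid.ker f) hg]
  exact toFinite _

section Kantorovich

variable {X : Type*} [Fintype X]

def transportCost (d : X → X → ℝ) (ω : X × X → ℝ) : ℝ := ∑ p, d p.1 p.2 * ω p

@[fun_prop]
theorem Continuous.transportCost {Y : Type*} [TopologicalSpace Y] {d : Y → X → X → ℝ}
    {ω : Y → X × X → ℝ} (hd : Continuous d) (hω : Continuous ω) :
    Continuous fun y => transportCost (d y) (ω y) := by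
  unfold _root_.transportCost
  fun_prop

theorem IsDist.le_one {μ : X → ℝ} (hμ : IsDist μ) (x : X) : μ x ≤ 1 :=
  hμ.2 ▸ single_le_sum (fun y _ => hμ.1 y) (mem_univ x)

theorem exists_isDist [Nonempty X] : ∃ μ : X → ℝ, IsDist μ := by
  classical
  obtain ⟨x⟩ := ‹Nonempty X›
  exact ⟨fun y => if y = x then 1 else 0, fun y => by positivity, by simp⟩

theorem isClosed_setOf_isDist : IsClosed {μ : X → ℝ | IsDist μ} := by
  simp only [IsDist, ofPred_and, ofPred_forall]
  exact (isClosed_iInter fun x => isClosed_le continuous_const (continuous_apply x)).inter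
    (isClosed_eq (by fun_prop) continuous_const)

theorem isCompact_setOf_isDist : IsCompact {μ : X → ℝ | IsDist μ} :=
  (isCompact_univ_pi fun _ => isCompact_Icc).of_isClosed_subset isClosed_setOf_isDist
    fun _ hμ => mem_univ_pi.2 fun x => ⟨hμ.1 x, hμ.le_one x⟩

theorem isClosed_setOf_isCoupling :
    IsClosed {p : (X → ℝ) × (X → ℝ) × (X × X → ℝ) | IsCoupling p.1 p.2.1 p.2.2} := by
  simp only [IsCoupling, ofPred_and, ofPred_forall]
  exact (isClosed_setOf_isDist.preimage continuous_snd.snd).inter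
    ((isClosed_iInter fun x => isClosed_eq (by fun_prop) (by fun_prop)).inter
      (isClosed_iInter fun y => isClosed_eq (by fun_prop) (by fun_prop)))

theorem isCompact_setOf_isCoupling (μ ν : X → ℝ) : IsCompact {ω | IsCoupling μ ν ω} :=
  isCompact_setOf_isDist.of_isClosed_subset
    (isClosed_setOf_isCoupling.preimage (by fun_prop : Continuous fun ω => (μ, ν, ω)))
    fun _ hω => hω.1

theorem IsDist.isCoupling_mul {μ ν : X → ℝ} (hμ : IsDist μ) (hν : IsDist ν) :
    IsCoupling μ ν fun p => μ p.1 * ν p.2 := by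
  refine ⟨⟨fun p => mul_nonneg (hμ.1 _) (hν.1 _), ?_⟩, fun x => ?_, fun y => ?_⟩
  · simp [Fintype.sum_prod_type, ← mul_sum, hν.2, hμ.2]
  · simp [← mul_sum, hν.2]
  · simp [← sum_mul, hμ.2]

theorem kant_eq_sInf_image (d : X → X → ℝ) (μ ν : X → ℝ) :
    kant d μ ν = sInf (transportCost d '' {ω | IsCoupling μ ν ω}) := by
  rw [kant]
  congr 1
  ext c
  constructor <;> rintro ⟨ω, hω, rfl⟩ <;> exact ⟨ω, hω, rfl⟩

theorem kant_le_transportCost (d : X → X → ℝ) {μ ν : X → ℝ} {ω : X × X → ℝ}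
    (hω : IsCoupling μ ν ω) : kant d μ ν ≤ transportCost d ω := by
  rw [kant_eq_sInf_image]
  exact csInf_le ((isCompact_setOf_isCoupling μ ν).image (by fun_prop)).bddBelow
    (mem_image_of_mem _ hω)

theorem exists_isCoupling_kant_eq (d : X → X → ℝ) {μ ν : X → ℝ} (hμ : IsDist μ) (hν : IsDist ν) :
    ∃ ω, IsCoupling μ ν ω ∧ kant d μ ν = transportCost d ω := by
  obtain ⟨ω, hω, hmin⟩ := (isCompact_setOf_isCoupling μ ν).exists_isMinOn
    ⟨_, hμ.isCoupling_mul hν⟩ (by fun_prop : Continuous (transportCost d)).continuousOn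
  refine ⟨ω, hω, le_antisymm (kant_le_transportCost d hω) ?_⟩
  rw [kant_eq_sInf_image]
  exact le_csInf ⟨_, mem_image_of_mem _ hω⟩ (forall_mem_image.2 fun ω' hω' => hmin hω')

theorem kant_one {μ ν : X → ℝ} (hμ : IsDist μ) (hν : IsDist ν) : kant (fun _ _ => 1) μ ν = 1 := by
  obtain ⟨ω, hω, hk⟩ := exists_isCoupling_kant_eq (fun _ _ => 1) hμ hν
  simpa [hk, transportCost] using hω.1.2

theorem isClosed_kant_epigraph :
    IsClosed {q : (X → X → ℝ) × (X → ℝ) × (X → ℝ) × ℝ |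
      IsDist q.2.1 ∧ IsDist q.2.2.1 ∧ kant q.1 q.2.1 q.2.2.1 ≤ q.2.2.2} := by
  have : CompactSpace {ω : X × X → ℝ // IsDist ω} :=
    isCompact_iff_compactSpace.mp isCompact_setOf_isDist
  have hF : IsClosed {x : ((X → X → ℝ) × (X → ℝ) × (X → ℝ) × ℝ) × {ω : X × X → ℝ // IsDist ω} |
      IsDist x.1.2.1 ∧ IsDist x.1.2.2.1 ∧ IsCoupling x.1.2.1 x.1.2.2.1 x.2.1 ∧
        transportCost x.1.1 x.2.1 ≤ x.1.2.2.2} := by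
    simp only [ofPred_and]
    exact (isClosed_setOf_isDist.preimage continuous_fst.snd.fst).inter
      ((isClosed_setOf_isDist.preimage continuous_fst.snd.snd.fst).inter
        ((isClosed_setOf_isCoupling.preimage
          (continuous_fst.snd.fst.prodMk (continuous_fst.snd.snd.fst.prodMk
            (continuous_subtype_val.comp continuous_snd)))).inter
          (isClosed_le (by fun_prop) (by fun_prop))))
  convert isClosedMap_fst_of_compactSpace _ hF using 1
  ext ⟨d, μ, ν, c⟩
  constructor
  · rintro ⟨hμ, hν, hc⟩
    obtain ⟨ω, hω, hk⟩ := exists_isCoupling_kant_eq d hμ hν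
    exact ⟨((d, μ, ν, c), ⟨ω, hω.1⟩), ⟨hμ, hν, hω, hk ▸ hc⟩, rfl⟩
  · rintro ⟨⟨q, ω⟩, ⟨hμ, hν, hω, hc⟩, rfl⟩
    exact ⟨hμ, hν, (kant_le_transportCost _ hω).trans hc⟩

end Kantorovich

section Bisimilarity

variable {S L : Type*} [Fintype S]

def IsPrefixedPt (lam : ℝ) (T : S → S → ℝ) (lab : S → L) (d : S → S → ℝ) : Prop :=
  (∀ a b, 0 ≤ d a b ∧ d a b ≤ 1) ∧ ∀ a b, psi lam T lab d a b ≤ d a b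

theorem isPrefixedPt_one {lam : ℝ} (hlam : lam ≤ 1) {T : S → S → ℝ} (hT : ∀ s, IsDist (T s))
    (lab : S → L) : IsPrefixedPt lam T lab fun _ _ => 1 := by
  refine ⟨fun _ _ => ⟨zero_le_one, le_rfl⟩, fun a b => ?_⟩
  rw [psi]
  split_ifs
  · rwa [kant_one (hT a) (hT b), mul_one]
  · exact le_rfl

theorem bdist_le {lam : ℝ} {T : S → S → ℝ} {lab : S → L} {d : S → S → ℝ}
    (hd : IsPrefixedPt lam T lab d) (s t : S) : bdist lam T lab s t ≤ d s t :=
  csInf_le ⟨0, by rintro _ ⟨d', hd', -, rfl⟩; exact (hd' s t).1⟩ ⟨d, hd.1, hd.2, rfl⟩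

theorem bdist_nonneg {lam : ℝ} {T : S → S → ℝ} {lab : S → L} {s t : S} :
    0 ≤ bdist lam T lab s t :=
  Real.sInf_nonneg <| by rintro _ ⟨d, hd, -, rfl⟩; exact (hd s t).1

theorem le_bdist {lam : ℝ} (hlam : lam ≤ 1) {T : S → S → ℝ} (hT : ∀ s, IsDist (T s))
    {lab : S → L} {s t : S} {c : ℝ} (h : ∀ d, IsPrefixedPt lam T lab d → c ≤ d s t) :
    c ≤ bdist lam T lab s t := by
  obtain ⟨h01, hpsi⟩ := isPrefixedPt_one hlam hT lab
  refine le_csInf ⟨1, _, h01, hpsi, rfl⟩ ?_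
  rintro _ ⟨d, hd01, hdpsi, rfl⟩
  exact h d ⟨hd01, hdpsi⟩

theorem bdist_congr_labels {L' : Type*} (lam : ℝ) (T : S → S → ℝ) {lab : S → L} {lab' : S → L'}
    (h : ∀ a b, lab a = lab b ↔ lab' a = lab' b) : bdist lam T lab = bdist lam T lab' := by
  have hpsi : psi lam T lab = psi lam T lab' := by
    funext d a b
    classical
    exact if_congr (h a b) rfl rfl
  unfold bdist
  rw [hpsi]

theorem isClosed_setOf_isPrefixedPt {lam : ℝ} (hlam : 0 < lam) (lab : S → L) :
    IsClosed {p : (S → S → ℝ) × (S → S → ℝ) |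
      (∀ s, IsDist (p.1 s)) ∧ IsPrefixedPt lam p.1 lab p.2} := by
  have hrows : IsClosed {p : (S → S → ℝ) × (S → S → ℝ) | ∀ s, IsDist (p.1 s)} := by
    simp only [ofPred_forall]
    exact isClosed_iInter fun s => isClosed_setOf_isDist.preimage (by fun_prop)
  have hbounds :
      IsClosed {p : (S → S → ℝ) × (S → S → ℝ) | ∀ a b, 0 ≤ p.2 a b ∧ p.2 a b ≤ 1} := by
    simp only [ofPred_forall, ofPred_and]
    exact isClosed_iInter fun a => isClosed_iInter fun b =>
      (isClosed_le continuous_const (by fun_prop)).inter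
        (isClosed_le (by fun_prop) continuous_const)
  have hpsi : ∀ a b, IsClosed {p : (S → S → ℝ) × (S → S → ℝ) |
      (∀ s, IsDist (p.1 s)) ∧ psi lam p.1 lab p.2 a b ≤ p.2 a b} := by
    intro a b
    by_cases hab : lab a = lab b
    · convert hrows.inter (isClosed_kant_epigraph.preimage
        (by fun_prop : Continuous fun p : (S → S → ℝ) × (S → S → ℝ) =>
          (p.2, p.1 a, p.1 b, p.2 a b / lam))) using 1
      ext p
      simp only [psi, if_pos hab, mem_inter_iff, Set.mem_preimage, mem_ofPred_eq,
        le_div_iff₀' hlam]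
      exact ⟨fun h => ⟨h.1, h.1 a, h.1 b, h.2⟩, fun h => ⟨h.1, h.2.2.2⟩⟩
    · simp only [psi, if_neg hab]
      exact hrows.inter (isClosed_le continuous_const
        (by fun_prop : Continuous fun p : (S → S → ℝ) × (S → S → ℝ) => p.2 a b))
  convert (hrows.inter hbounds).inter (isClosed_iInter fun a => isClosed_iInter (hpsi a)) using 1
  ext p
  simp only [IsPrefixedPt, mem_inter_iff, mem_iInter, mem_ofPred_eq]
  exact ⟨fun h => ⟨⟨h.1, h.2.1⟩, fun a b => ⟨h.1, h.2.2 a b⟩⟩,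
    fun h => ⟨h.1.1, h.1.2, fun a b => (h.2 a b).2⟩⟩

theorem exists_isMinOn_bdist {lam : ℝ} (hlam : 0 < lam ∧ lam ≤ 1) (lab : S → L)
    {𝒯 : Set (S → S → ℝ)} (h𝒯 : IsCompact 𝒯) (hne : 𝒯.Nonempty)
    (hrows : ∀ T ∈ 𝒯, ∀ s, IsDist (T s)) (s t : S) :
    ∃ T ∈ 𝒯, IsMinOn (fun T => bdist lam T lab s t) 𝒯 T := by
  let A := {p : (S → S → ℝ) × (S → S → ℝ) |
    p.1 ∈ 𝒯 ∧ (∀ s, IsDist (p.1 s)) ∧ IsPrefixedPt lam p.1 lab p.2}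
  have hbox : IsCompact (univ.pi fun _ : S => univ.pi fun _ : S => Icc (0 : ℝ) 1) :=
    isCompact_univ_pi fun _ => isCompact_univ_pi fun _ => isCompact_Icc
  have hA : IsCompact A :=
    (h𝒯.prod hbox).of_isClosed_subset
      ((h𝒯.isClosed.preimage continuous_fst).inter (isClosed_setOf_isPrefixedPt hlam.1 lab))
      fun p hp => ⟨hp.1, mem_univ_pi.2 fun a => mem_univ_pi.2 fun b => hp.2.2.1 a b⟩
  obtain ⟨T₀, hT₀⟩ := hne
  obtain ⟨⟨T, d⟩, ⟨hT, -, hd⟩, hmin⟩ := hA.exists_isMinOn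
    ⟨(T₀, fun _ _ => 1), hT₀, hrows T₀ hT₀, isPrefixedPt_one hlam.2 (hrows T₀ hT₀) lab⟩
    (by fun_prop : Continuous fun p : (S → S → ℝ) × (S → S → ℝ) => p.2 s t).continuousOn
  refine ⟨T, hT, isMinOn_iff.2 fun T' hT' => ?_⟩
  calc bdist lam T lab s t ≤ d s t := bdist_le hd s t
    _ ≤ bdist lam T' lab s t :=
      le_bdist hlam.2 (hrows T' hT') fun d' hd' =>
        isMinOn_iff.1 hmin (T', d') ⟨hT', hrows T' hT', hd'⟩

end Bisimilarity

section DisjointUnion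

variable {M N L : Type*}

theorem continuous_sumT (τ : M → M → ℝ) : Continuous (sumT τ : (N → N → ℝ) → _) :=
  continuous_pi fun s => continuous_pi fun t => by
    cases s <;> cases t <;> simp only [sumT] <;> fun_prop

variable [Fintype M] [Fintype N]

theorem isDist_sumT {τ : M → M → ℝ} {θ : N → N → ℝ} (hτ : ∀ m, IsDist (τ m))
    (hθ : ∀ i, IsDist (θ i)) : ∀ s, IsDist (sumT τ θ s)
  | .inl m => ⟨fun | .inl _ => (hτ m).1 _ | .inr _ => le_rfl,
      by simpa [Fintype.sum_sum_type, sumT] using (hτ m).2⟩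
  | .inr i => ⟨fun | .inl _ => le_rfl | .inr _ => (hθ i).1 _,
      by simpa [Fintype.sum_sum_type, sumT] using (hθ i).2⟩

theorem isCompact_setOf_forall_isDist : IsCompact {θ : N → N → ℝ | ∀ i, IsDist (θ i)} := by
  convert isCompact_univ_pi fun _ : N => isCompact_setOf_isDist (X := N) using 1
  ext θ
  exact mem_univ_pi.symm

def approxDistances (lam : ℝ) (τ : M → M → ℝ) (ℓ : M → L) (m0 : M) (α : N → L) (n0 : N) :
    Set ℝ :=
  (fun θ => bdist lam (sumT τ θ) (sumL ℓ α) (.inl m0) (.inr n0)) '' {θ | ∀ i, IsDist (θ i)}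

theorem exists_isLeast_approxDistances {lam : ℝ} (hlam : 0 < lam ∧ lam ≤ 1) {τ : M → M → ℝ}
    (hτ : ∀ m, IsDist (τ m)) (ℓ : M → L) (m0 : M) (α : N → L) (n0 : N) :
    ∃ θ : N → N → ℝ, (∀ i, IsDist (θ i)) ∧ IsLeast (approxDistances lam τ ℓ m0 α n0)
      (bdist lam (sumT τ θ) (sumL ℓ α) (.inl m0) (.inr n0)) := by
  have : Nonempty N := ⟨n0⟩
  obtain ⟨μ, hμ⟩ := exists_isDist (X := N)
  obtain ⟨_, ⟨θ, hθ, rfl⟩, hmin⟩ := exists_isMinOn_bdist hlam (sumL ℓ α)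
    (isCompact_setOf_forall_isDist.image (continuous_sumT τ)) ⟨_, mem_image_of_mem _ fun _ => hμ⟩
    (forall_mem_image.2 fun θ hθ => isDist_sumT hτ hθ) (.inl m0) (.inr n0)
  exact ⟨θ, hθ, mem_image_of_mem _ hθ, forall_mem_image.2 fun θ' hθ' =>
    isMinOn_iff.1 hmin _ (mem_image_of_mem _ hθ')⟩

theorem approxDistances_factorsThrough (lam : ℝ) (τ : M → M → ℝ) (ℓ : M → L) (m0 : M) (n0 : N) :
    (fun α => approxDistances lam τ ℓ m0 α n0).FactorsThrough
      fun α a b => sumL ℓ α a = sumL ℓ α b := by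
  intro α α' h
  simp only [approxDistances,
    bdist_congr_labels lam _ fun a b => Iff.of_eq (congrFun₂ h a b)]

end DisjointUnion

theorem stmt11_general {M L : Type*} [Fintype M] (k : ℕ) (hk : 1 ≤ k)
    (lam : ℝ) (hlam : 0 < lam ∧ lam ≤ 1)
    (τ : M → M → ℝ) (hτ : ∀ m, IsDist (τ m)) (ℓ : M → L) (m0 : M) :
    ∃ (n : ℕ) (_ : 0 < n) (_ : n ≤ k)
      (θ : Fin n → Fin n → ℝ) (α : Fin n → L) (n0 : Fin n),
      (∀ i, IsDist (θ i)) ∧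
      ∀ (n' : ℕ), 0 < n' → n' ≤ k →
        ∀ (θ' : Fin n' → Fin n' → ℝ) (α' : Fin n' → L) (n0' : Fin n'),
          (∀ i, IsDist (θ' i)) →
          bdist lam (sumT τ θ) (sumL ℓ α) (Sum.inl m0) (Sum.inr n0)
            ≤ bdist lam (sumT τ θ') (sumL ℓ α') (Sum.inl m0) (Sum.inr n0') := by
  let V := ⋃ (n : Fin (k + 1)) (n0 : Fin n),
    range fun α : Fin n → L => sInf (approxDistances lam τ ℓ m0 α n0)
  have hV : V.Finite := finite_iUnion fun n => finite_iUnion fun n0 =>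
    Function.FactorsThrough.finite_range fun _ _ h =>
      congrArg sInf (approxDistances_factorsThrough lam τ ℓ m0 n0 h)
  have hVne : V.Nonempty :=
    ⟨_, mem_iUnion₂.2 ⟨⟨1, by omega⟩, ⟨0, one_pos⟩, mem_range_self fun _ => ℓ m0⟩⟩
  obtain ⟨_, hx, hmin⟩ := exists_min_image V id hV hVne
  obtain ⟨n, n0, α, rfl⟩ : ∃ (n : Fin (k + 1)) (n0 : Fin n) (α : Fin n → L),
      sInf (approxDistances lam τ ℓ m0 α n0) = _ := by simpa [V] using hx
  obtain ⟨θ, hθ, hleast⟩ := exists_isLeast_approxDistances hlam hτ ℓ m0 α n0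
  refine ⟨n, n0.pos, Nat.lt_succ_iff.1 n.2, θ, α, n0, hθ, fun n' _ hn' θ' α' n0' hθ' => ?_⟩
  calc _ = sInf (approxDistances lam τ ℓ m0 α n0) := hleast.csInf_eq.symm
    _ ≤ sInf (approxDistances lam τ ℓ m0 α' n0') :=
      hmin _ (mem_iUnion₂.2 ⟨⟨n', Nat.lt_succ_of_le hn'⟩, n0', mem_range_self α'⟩)
    _ ≤ _ := csInf_le ⟨0, forall_mem_image.2 fun _ _ => bdist_nonneg⟩ ⟨θ', hθ', rfl⟩

theorem stmt11 {M L : Type*} [Fintype M] [Nonempty M] (k : ℕ) (hk : 1 ≤ k)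
    (lam : ℝ) (hlam : 0 < lam ∧ lam ≤ 1)
    (τ : M → M → ℝ) (hτ : ∀ m, IsDist (τ m)) (ℓ : M → L) (m0 : M) :
    ∃ (n : ℕ) (_ : 0 < n) (_ : n ≤ k)
      (θ : Fin n → Fin n → ℝ) (α : Fin n → L) (n0 : Fin n),
      (∀ i, IsDist (θ i)) ∧
      ∀ (n' : ℕ), 0 < n' → n' ≤ k →
        ∀ (θ' : Fin n' → Fin n' → ℝ) (α' : Fin n' → L) (n0' : Fin n'),
          (∀ i, IsDist (θ' i)) →
          bdist lam (sumT τ θ) (sumL ℓ α) (Sum.inl m0) (Sum.inr n0)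
            ≤ bdist lam (sumT τ θ') (sumL ℓ α') (Sum.inl m0) (Sum.inr n0') :=
  stmt11_general k hk lam hlam τ hτ ℓ m0
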